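/- For every y > 0, the improper integral ∫₁^∞ (y/t)·(1 − (1 + y²/t)^{−1/2}) dt converges and equals 2y·log((1 + √(1 + y²))/2), which equals m(y) := |2y·log(2·y^{−2}·(√(y² + 1) − 1))|. -/

import Mathlib

open MeasureTheory

/-- The deficit `m(y) = |2y·log(2·y^{−2}·(√(y²+1) − 1))|`. -/
noncomputable def mDeficit (y : ℝ) : ℝ :=
  |2 * y * Real.log (2 / y ^ 2 * (Real.sqrt (y ^ 2 + 1) - 1))|

/-- The improper integral `∫₁^∞ (y/t)·(1 − (1 + y²/t)^{−1/2}) dt` converges and equals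
`2y·log((1 + √(1+y²))/2)`, which equals the deficit `m(y)`. -/
theorem deficit_integral_value (y : ℝ) (hy : 0 < y) :
    IntegrableOn (fun t : ℝ => (y / t) * (1 - (Real.sqrt (1 + y ^ 2 / t))⁻¹))
      (Set.Ici (1:ℝ))
    ∧ (∫ t in Set.Ici (1:ℝ), (y / t) * (1 - (Real.sqrt (1 + y ^ 2 / t))⁻¹))
        = 2 * y * Real.log ((1 + Real.sqrt (1 + y ^ 2)) / 2)
    ∧ 2 * y * Real.log ((1 + Real.sqrt (1 + y ^ 2)) / 2) = mDeficit y := by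
  set g : ℝ → ℝ := fun t => -(2*y) * Real.log (1 + Real.sqrt (1 + y^2/t)) with hgdef
  have key : ∀ t ∈ Set.Ioi (0:ℝ),
      HasDerivAt g ((y/t) * (1 - (Real.sqrt (1 + y^2/t))⁻¹)) t := by
    intro t ht
    have ht0 : (0:ℝ) < t := ht
    have h1 : (0:ℝ) < 1 + y^2/t := by positivity
    set s := Real.sqrt (1 + y^2/t) with hsdef
    have hs : s ^ 2 = 1 + y^2/t := Real.sq_sqrt h1.le
    have hs1 : 1 ≤ s := by
      rw [hsdef, Real.one_le_sqrt]
      nlinarith [div_nonneg (sq_nonneg y) ht0.le]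
    have hspos : 0 < s := lt_of_lt_of_le one_pos hs1
    have hs' : s ^ 2 * t = t + y ^ 2 := by
      rw [hs]; field_simp
    have hd1 : HasDerivAt (fun u : ℝ => 1 + y^2/u) (y^2 * (-(t^2)⁻¹)) t := by
      have := ((hasDerivAt_inv ht0.ne').const_mul (y^2)).const_add (1:ℝ)
      simpa [div_eq_mul_inv] using this
    have hd2 : HasDerivAt (fun u : ℝ => Real.sqrt (1 + y^2/u))
        (1 / (2 * s) * (y^2 * (-(t^2)⁻¹))) t :=
      (Real.hasDerivAt_sqrt h1.ne').comp t hd1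
    have hd3 : HasDerivAt (fun u : ℝ => 1 + Real.sqrt (1 + y^2/u))
        (1 / (2 * s) * (y^2 * (-(t^2)⁻¹))) t :=
      hd2.const_add 1
    have hne : 1 + s ≠ 0 := by positivity
    have hd4 := (hd3.log hne).const_mul (-(2*y))
    refine HasDerivAt.congr_deriv hd4 (Eq.symm ?_)
    have hsne : s ≠ 0 := hspos.ne'
    rw [← hsdef]
    field_simp
    linear_combination hs'
  have hpos : ∀ t ∈ Set.Ioi (1:ℝ), 0 ≤ (y/t) * (1 - (Real.sqrt (1 + y^2/t))⁻¹) := by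
    intro t ht
    have ht0 : (0:ℝ) < t := lt_trans one_pos ht
    have hs1 : 1 ≤ Real.sqrt (1 + y^2/t) := by
      rw [Real.one_le_sqrt]
      nlinarith [div_nonneg (sq_nonneg y) ht0.le]
    have : (Real.sqrt (1 + y^2/t))⁻¹ ≤ 1 := by
      rw [inv_le_one_iff₀]; right; exact hs1
    have h2 : 0 ≤ 1 - (Real.sqrt (1 + y^2/t))⁻¹ := by linarith
    positivity
  have hcont : ContinuousWithinAt g (Set.Ici (1:ℝ)) 1 :=
    ((key 1 (Set.mem_Ioi.2 one_pos)).continuousAt).continuousWithinAt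
  have htend : Filter.Tendsto g Filter.atTop (nhds (-(2*y) * Real.log 2)) := by
    have h0 : Filter.Tendsto (fun u : ℝ => 1 + y^2/u) Filter.atTop (nhds 1) := by
      have := (tendsto_inv_atTop_zero.const_mul (y^2)).const_add (1:ℝ)
      simpa [div_eq_mul_inv] using this
    have h1 : Filter.Tendsto (fun u : ℝ => 1 + Real.sqrt (1 + y^2/u))
        Filter.atTop (nhds 2) := by
      have h := ((Real.continuous_sqrt.tendsto 1).comp h0).const_add (1:ℝ)
      rw [show (2:ℝ) = 1 + Real.sqrt 1 by rw [Real.sqrt_one]; norm_num]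
      simpa using h
    have h2 := (Real.continuousAt_log (by norm_num : (2:ℝ) ≠ 0)).tendsto.comp h1
    exact h2.const_mul _
  have hderivIoi : ∀ x ∈ Set.Ioi (1:ℝ),
      HasDerivAt g ((y/x) * (1 - (Real.sqrt (1 + y^2/x))⁻¹)) x :=
    fun x hx => key x (Set.mem_Ioi.2 (lt_trans one_pos (Set.mem_Ioi.1 hx)))
  have hint : IntegrableOn (fun t : ℝ => (y / t) * (1 - (Real.sqrt (1 + y ^ 2 / t))⁻¹))
      (Set.Ioi (1:ℝ)) :=
    integrableOn_Ioi_deriv_of_nonneg hcont hderivIoi hpos htend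
  have hval : ∫ t in Set.Ioi (1:ℝ), (y / t) * (1 - (Real.sqrt (1 + y ^ 2 / t))⁻¹)
      = -(2*y) * Real.log 2 - g 1 :=
    integral_Ioi_of_hasDerivAt_of_nonneg hcont hderivIoi hpos htend
  have hs1 : 1 ≤ Real.sqrt (1 + y^2) := by
    rw [Real.one_le_sqrt]
    nlinarith [sq_nonneg y]
  have hS0 : 0 < 1 + Real.sqrt (1 + y^2) := by positivity
  have hsq : Real.sqrt (1 + y^2) ^ 2 = 1 + y^2 := Real.sq_sqrt (by positivity)
  have hval2 : -(2*y) * Real.log 2 - g 1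
      = 2 * y * Real.log ((1 + Real.sqrt (1 + y^2)) / 2) := by
    have hg1 : g 1 = -(2*y) * Real.log (1 + Real.sqrt (1 + y^2)) := by
      simp [hgdef]
    rw [hg1, Real.log_div hS0.ne' (by norm_num)]
    ring
  refine ⟨?_, ?_, ?_⟩
  · rwa [integrableOn_Ici_iff_integrableOn_Ioi]
  · rw [MeasureTheory.integral_Ici_eq_integral_Ioi, hval, hval2]
  · rw [mDeficit]
    have harg : 2 / y ^ 2 * (Real.sqrt (y ^ 2 + 1) - 1)
        = ((1 + Real.sqrt (1 + y^2)) / 2)⁻¹ := by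
      rw [show y^2 + 1 = 1 + y^2 by ring, inv_div]
      field_simp
      linear_combination hsq
    rw [harg, Real.log_inv]
    have hlog : 0 ≤ Real.log ((1 + Real.sqrt (1 + y^2)) / 2) :=
      Real.log_nonneg (by linarith)
    rw [abs_of_nonpos (by nlinarith)]
    ring
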